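/- arXiv:1810.09285 — 2 statements merged into one kernel-verified Lean document; each statement's English description precedes it below -/
import Mathlib

section
/- Let x₀,…,xₙ > 0 and b > 0, and let γ̄ be a strictly decreasing sequence from b to 0 satisfying (γ̄ᵢ − γ̄_{i+1})xᵢ = (γ̄_{i+1} − γ̄_{i+2})x_{i+1} for all i. Then for any other admissible sequence γ̂ (strictly decreasing from b to 0) with γ̂ ≠ γ̄, one has min_i (γ̂ᵢ − γ̂_{i+1})xᵢ < min_i (γ̄ᵢ − γ̄_{i+1})xᵢ. -/
/-- Admissible sequences: strictly decreasing from `b` (at 0) to `0` (at `n+1`). -/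
def Admissible (n : ℕ) (b : ℝ) (γ : ℕ → ℝ) : Prop :=
  γ 0 = b ∧ γ (n + 1) = 0 ∧ ∀ i < n + 1, γ (i + 1) < γ i

/-- The objective: minimum over `i ≤ n` of the weighted consecutive gaps. -/
noncomputable def gapMin (n : ℕ) (x : ℕ → ℝ) (γ : ℕ → ℝ) : ℝ :=
  Finset.inf' (Finset.range (n + 1)) ⟨0, Finset.mem_range.2 (Nat.succ_pos n)⟩
    (fun i => (γ i - γ (i + 1)) * x i)

theorem gapMin_lt_of_ne (n : ℕ) (b : ℝ) (hb : 0 < b) (x : ℕ → ℝ)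
    (hx : ∀ i ≤ n, 0 < x i) (γbar γhat : ℕ → ℝ)
    (hbar : Admissible n b γbar)
    (hbal : ∀ i < n, (γbar i - γbar (i + 1)) * x i = (γbar (i + 1) - γbar (i + 2)) * x (i + 1))
    (hhat : Admissible n b γhat)
    (hne : ∃ i ≤ n + 1, γhat i ≠ γbar i) :
    gapMin n x γhat < gapMin n x γbar := by
  by_contra hlt
  push_neg at hlt
  obtain ⟨h0b, hnb, hsb⟩ := hbar
  obtain ⟨h0h, hnh, hsh⟩ := hhat
  -- all bar gaps are equal to the first one
  have hbarconst : ∀ i ≤ n, (γbar i - γbar (i + 1)) * x i = (γbar 0 - γbar 1) * x 0 := by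
    intro i hi
    induction i with
    | zero => rfl
    | succ k ih =>
      rw [show k + 1 + 1 = k + 2 from rfl, ← hbal k (by omega), ih (by omega)]
  have hbarmin : gapMin n x γbar = (γbar 0 - γbar 1) * x 0 := by
    unfold gapMin
    apply le_antisymm
    · exact Finset.inf'_le _ (Finset.mem_range.2 (Nat.succ_pos n))
    · apply Finset.le_inf'
      intro i hi
      rw [hbarconst i (Nat.lt_succ_iff.mp (Finset.mem_range.mp hi))]
  have hgap : ∀ i ≤ n, γbar i - γbar (i + 1) ≤ γhat i - γhat (i + 1) := by
    intro i hi
    have hx' := hx i hi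
    have h1 : (γbar i - γbar (i + 1)) * x i ≤ (γhat i - γhat (i + 1)) * x i := by
      calc (γbar i - γbar (i + 1)) * x i = gapMin n x γbar := by
            rw [hbarmin, hbarconst i hi]
        _ ≤ gapMin n x γhat := hlt
        _ ≤ (γhat i - γhat (i + 1)) * x i :=
            Finset.inf'_le _ (Finset.mem_range.2 (by omega))
    exact le_of_mul_le_mul_right h1 hx'
  have hsum : ∑ i ∈ Finset.range (n + 1),
      ((γhat i - γhat (i + 1)) - (γbar i - γbar (i + 1))) = 0 := by
    rw [Finset.sum_sub_distrib, Finset.sum_range_sub' γhat, Finset.sum_range_sub' γbar,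
      h0b, hnb, h0h, hnh]
    ring
  have hall : ∀ i ∈ Finset.range (n + 1),
      (γhat i - γhat (i + 1)) - (γbar i - γbar (i + 1)) = 0 :=
    (Finset.sum_eq_zero_iff_of_nonneg (fun i hi =>
      sub_nonneg.2 (hgap i (Nat.lt_succ_iff.mp (Finset.mem_range.mp hi))))).1 hsum
  have heq : ∀ i ≤ n + 1, γhat i = γbar i := by
    intro i hi
    induction i with
    | zero => rw [h0h, h0b]
    | succ k ih =>
      have hk := hall k (Finset.mem_range.2 (by omega))
      have := ih (by omega)
      linarith
  obtain ⟨i, hi, hne'⟩ := hne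
  exact hne' (heq i hi)
end

section
/- For every t ∈ ℝ and j ≥ 1, the j-th Hermite coefficient of the indicator function ω ↦ χ(ω > t) equals φ(t)·H_{j−1}(t), and the 0-th coefficient equals 1 − Φ(t). That is, ∫_ℝ χ(ω > t)·H_j(ω)·φ(ω) dω = φ(t)·H_{j−1}(t) for j ≥ 1. -/
open MeasureTheory Polynomial

noncomputable def gaussPDF (x : ℝ) : ℝ :=
  (Real.sqrt (2 * Real.pi))⁻¹ * Real.exp (-x ^ 2 / 2)

noncomputable def stdCDF (t : ℝ) : ℝ := ∫ w in Set.Iic t, gaussPDF w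

/-! Since `(H_k φ)' = -H_{k+1} φ` (the recursion `H_{k+1} = X H_k - H_k'`), the coefficient
`∫_t^∞ H_{k+1} φ` is `-[H_k φ]_t^∞ = H_k(t) φ(t)`; the boundary term at `∞` vanishes because
a polynomial times `φ` is `o(e^{-x})`, which also makes the integrand integrable. -/

open Filter Asymptotics ProbabilityTheory

lemma gaussPDF_eq_gaussianPDFReal : gaussPDF = gaussianPDFReal 0 1 := by
  ext x
  simp [gaussPDF, gaussianPDFReal]

lemma integral_Ioi_gaussPDF (t : ℝ) : ∫ w in Set.Ioi t, gaussPDF w = 1 - stdCDF t := by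
  have hint : Integrable gaussPDF := gaussPDF_eq_gaussianPDFReal ▸ integrable_gaussianPDFReal 0 1
  have htotal : ∫ w, gaussPDF w = 1 :=
    gaussPDF_eq_gaussianPDFReal ▸ integral_gaussianPDFReal_eq_one 0 one_ne_zero
  rw [← htotal, ← intervalIntegral.integral_Iic_add_Ioi hint.integrableOn hint.integrableOn, stdCDF]
  ring

lemma continuous_gaussPDF : Continuous gaussPDF := by
  unfold gaussPDF
  fun_prop

lemma hasDerivAt_gaussPDF (x : ℝ) : HasDerivAt gaussPDF (-x * gaussPDF x) x := by
  refine ((((hasDerivAt_pow 2 x).neg.div_const 2).exp).const_mul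
    (Real.sqrt (2 * Real.pi))⁻¹).congr_deriv ?_
  simp only [gaussPDF, Pi.neg_apply]
  ring

lemma hasDerivAt_aeval_hermite_mul_gaussPDF (k : ℕ) (x : ℝ) :
    HasDerivAt (fun w => aeval w (hermite k) * gaussPDF w)
      (-(aeval x (hermite (k + 1)) * gaussPDF x)) x := by
  refine (((hermite k).hasDerivAt_aeval x).mul (hasDerivAt_gaussPDF x)).congr_deriv ?_
  rw [hermite_succ, map_sub, map_mul, aeval_X]
  ring

lemma gaussPDF_isBigO_exp_neg_two_mul : gaussPDF =O[atTop] fun x => Real.exp (-2 * x) := by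
  refine IsBigO.of_bound (Real.sqrt (2 * Real.pi))⁻¹ ?_
  filter_upwards [eventually_ge_atTop 4] with x hx
  rw [gaussPDF, norm_mul, Real.norm_of_nonneg (by positivity : (0 : ℝ) ≤ (Real.sqrt (2 * Real.pi))⁻¹),
    Real.norm_of_nonneg (Real.exp_pos _).le, Real.norm_of_nonneg (Real.exp_pos _).le]
  gcongr
  nlinarith

lemma aeval_mul_gaussPDF_isLittleO_exp_neg {R : Type*} [CommSemiring R] [Algebra R ℝ]
    (p : R[X]) : (fun x : ℝ => aeval x p * gaussPDF x) =o[atTop] fun x => Real.exp (-x) := by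
  have hp : (fun x : ℝ => aeval x p) =o[atTop] Real.exp := by
    refine isLittleO_of_tendsto (fun x hx => absurd hx (Real.exp_ne_zero x)) ?_
    simpa only [eval_map_algebraMap] using (p.map (algebraMap R ℝ)).tendsto_div_exp_atTop
  refine (hp.mul_isBigO gaussPDF_isBigO_exp_neg_two_mul).congr_right fun x => ?_
  rw [← Real.exp_add]
  ring_nf

lemma integral_Ioi_aeval_hermite_succ_mul_gaussPDF (k : ℕ) (t : ℝ) :
    ∫ w in Set.Ioi t, aeval w (hermite (k + 1)) * gaussPDF w =
      gaussPDF t * aeval t (hermite k) := by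
  have hint : IntegrableOn (fun w => aeval w (hermite (k + 1)) * gaussPDF w) (Set.Ioi t) :=
    integrable_of_isBigO_exp_neg one_pos
      ((hermite (k + 1)).continuous_aeval.mul continuous_gaussPDF).continuousOn
      (by simpa only [neg_one_mul] using (aeval_mul_gaussPDF_isLittleO_exp_neg _).isBigO)
  have hftc := integral_Ioi_of_hasDerivAt_of_tendsto
    ((hermite k).continuous_aeval.mul continuous_gaussPDF).continuousWithinAt
    (fun x _ => hasDerivAt_aeval_hermite_mul_gaussPDF k x) hint.neg
    ((aeval_mul_gaussPDF_isLittleO_exp_neg _).trans_tendsto Real.tendsto_exp_neg_atTop_nhds_zero)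
  rw [integral_neg, Pi.mul_apply] at hftc
  linarith

theorem hermite_coeff_indicator (t : ℝ) :
    (∫ w in Set.Ioi t, gaussPDF w) = 1 - stdCDF t ∧
    ∀ j : ℕ, 1 ≤ j →
      (∫ w in Set.Ioi t, (aeval w (hermite j)) * gaussPDF w) =
        gaussPDF t * aeval t (hermite (j - 1)) := by
  refine ⟨integral_Ioi_gaussPDF t, fun j hj => ?_⟩
  obtain ⟨k, rfl⟩ := Nat.exists_eq_add_of_le' hj
  exact integral_Ioi_aeval_hermite_succ_mul_gaussPDF k t
end
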